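/- arXiv:2102.02931 — 2 statements merged into one kernel-verified Lean document; each statement's English description precedes it below -/
import Mathlib

section
/- A matching M is weakly stable if and only if it is induced by cutoff scores d such that d(p) = 0 for every project p that is unconstrained for M. -/
open Finset

/-- An instance of the two-sided matching problem: applicants `A` with strict preference
lists over acceptable projects, projects `P` with strict preference lists over
acceptable applicants (best first), and capacities. -/
structure MatchInst (A P : Type) where
  prefA : A → List P
  prefP : P → List A
  cap : P → ℕ

variable {A P : Type} [Fintype A] [Fintype P] [DecidableEq A] [DecidableEq P]

/-- number of applicants matched to project `p` -/
def mcount (M : A → Option P) (p : P) : ℕ := (univ.filter fun a => M a = some p).card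

/-- counts after adding one extra applicant to project `p` (the matching `M ∪ {(a,p)}`) -/
def addCount (M : A → Option P) (p : P) : P → ℕ :=
  fun q => mcount M q + if q = p then 1 else 0

/-- the matching `(M ∪ {(a,p)}) \ {(a, M(a))}` -/
def swap (M : A → Option P) (a : A) (p : P) : A → Option P := Function.update M a (some p)

/-- a feasibility function on (anonymous) distributions of applicants over projects,
satisfying the heredity property -/
def Heredity (f : (P → ℕ) → Prop) : Prop :=
  f (fun _ => 0) ∧ ∀ v w : P → ℕ, (∀ p, w p ≤ v p) → f v → f w

namespace MatchInst

variable (I : MatchInst A P)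

def accA (a : A) (p : P) : Prop := p ∈ I.prefA a
def accP (p : P) (a : A) : Prop := a ∈ I.prefP p
/-- rank of project `p` in applicant `a`'s list (0-indexed; lower is better) -/
def rkA (a : A) (p : P) : ℕ := (I.prefA a).idxOf p
/-- rank of applicant `a` in project `p`'s list (0-indexed; lower is better) -/
def rkP (p : P) (a : A) : ℕ := (I.prefP p).idxOf a
/-- score of applicant `a` at project `p`: `|A| - k + 1` if `a` is ranked `k`-th, `0` if unranked -/
def score (p : P) (a : A) : ℕ :=
  if a ∈ I.prefP p then Fintype.card A - (I.prefP p).idxOf a else 0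

def IsMatching (M : A → Option P) : Prop :=
  (∀ a p, M a = some p → I.accA a p ∧ I.accP p a) ∧ ∀ p, mcount M p ≤ I.cap p

/-- `a` strictly prefers project `p` to the assignment `o` (being unmatched is worst) -/
def Prefers (a : A) (p : P) (o : Option P) : Prop :=
  I.accA a p ∧ ∀ q, o = some q → I.rkA a p < I.rkA a q

/-- no justified envy -/
def Fair (M : A → Option P) : Prop :=
  ∀ a p, M a ≠ some p → I.Prefers a p (M a) →
    ∀ a', M a' = some p → I.rkP p a' < I.rkP p a

/-- applicant `a` is admissible at project `p` under cutoffs `d` -/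
def Adm (d : P → ℕ) (a : A) (p : P) : Prop :=
  I.accA a p ∧ I.accP p a ∧ d p ≤ I.score p a

/-- cutoffs `d` induce the matching `M`: every applicant is matched to her most
preferred project where she is admissible (and unmatched if there is none) -/
def Induces (d : P → ℕ) (M : A → Option P) : Prop :=
  ∀ a : A,
    (∀ p, M a = some p → I.Adm d a p ∧ ∀ q, I.Adm d a q → q ≠ p → I.rkA a p < I.rkA a q) ∧
    (M a = none → ∀ p, ¬ I.Adm d a p)

def Blocking (M : A → Option P) (a : A) (p : P) : Prop :=
  I.Prefers a p (M a) ∧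
    ((mcount M p < I.cap p ∧ I.accP p a) ∨ ∃ a', M a' = some p ∧ I.rkP p a < I.rkP p a')

def StronglyStable (f : (P → ℕ) → Prop) (M : A → Option P) : Prop :=
  I.IsMatching M ∧ f (mcount M) ∧
    ∀ a p, I.Blocking M a p →
      (∀ a', M a' = some p → I.rkP p a' < I.rkP p a) ∧ ¬ f (mcount (swap M a p))

/-- weak stability in terms of permitted blocking pairs -/
def WeaklyStableBlk (f : (P → ℕ) → Prop) (M : A → Option P) : Prop :=
  I.IsMatching M ∧ f (mcount M) ∧
    ∀ a p, I.Blocking M a p →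
      (∀ a', M a' = some p → I.rkP p a' < I.rkP p a) ∧ ¬ f (addCount M p)

def WeaklyNonWasteful (f : (P → ℕ) → Prop) (M : A → Option P) : Prop :=
  f (mcount M) ∧ ∀ a p, M a ≠ some p → I.accP p a → I.Prefers a p (M a) →
    ¬ f (addCount M p) ∨ I.cap p ≤ mcount M p

/-- weak stability as fairness plus weak non-wastefulness -/
def WeaklyStable (f : (P → ℕ) → Prop) (M : A → Option P) : Prop :=
  I.IsMatching M ∧ I.Fair M ∧ I.WeaklyNonWasteful f M

def CutoffNonWasteful (f : (P → ℕ) → Prop) (M : A → Option P) : Prop :=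
  f (mcount M) ∧ ∀ a p, M a ≠ some p → I.accP p a → I.Prefers a p (M a) →
    ¬ f (mcount (swap M a p)) ∨
    (∃ a', M a' ≠ some p ∧ I.accP p a' ∧ I.rkP p a' < I.rkP p a ∧
      I.Prefers a' p (M a') ∧ ¬ f (mcount (swap M a' p))) ∨
    I.cap p ≤ mcount M p

def CutoffStable (f : (P → ℕ) → Prop) (M : A → Option P) : Prop :=
  I.IsMatching M ∧ I.Fair M ∧ I.CutoffNonWasteful f M

/-- project `p` is unconstrained for `M`: one more applicant can be added to `p` feasibly -/
def Unconstrained (f : (P → ℕ) → Prop) (M : A → Option P) (p : P) : Prop :=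
  f (addCount M p)

/-- cutoffs after decreasing the cutoff of `p` by one -/
def decCut (d : P → ℕ) (p : P) : P → ℕ := Function.update d p (d p - 1)

/-- minimal cutoffs: no cutoff can be decreased keeping the induced matching feasible -/
def MinimalCutoffs (f : (P → ℕ) → Prop) (d : P → ℕ) : Prop :=
  ∀ p, d p = 0 ∨ ∀ M', I.Induces (decCut d p) M' → ¬ f (mcount M')

def StrictlyBetter (a : A) (o o' : Option P) : Prop :=
  ∃ p, o = some p ∧ I.accA a p ∧ ∀ q, o' = some q → I.rkA a p < I.rkA a q

def ParetoDominates (M' M : A → Option P) : Prop :=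
  (∀ a, M' a = M a ∨ I.StrictlyBetter a (M' a) (M a)) ∧
    ∃ a, I.StrictlyBetter a (M' a) (M a)

end MatchInst

/-!
If `M` is weakly stable, give every unconstrained project the cutoff `0` and every other
project `p` the lowest score among `M(p)`. Weak stability says exactly that nobody who prefers
`p` to her own assignment clears that cutoff, so these cutoffs induce `M`. Conversely, if
cutoffs `d` induce `M`, an applicant who prefers `p` to her assignment scores below `d p`,
hence below everybody in `M(p)`; and `d p > 0` forces `p` to be constrained.
-/

namespace MatchInst

variable {A P : Type}

lemma Prefers.ne [DecidableEq P] {I : MatchInst A P} {a : A} {p : P} {o : Option P}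
    (h : I.Prefers a p o) : o ≠ some p :=
  fun ho => (h.2 p ho).false

lemma accP_of_rkP_lt [DecidableEq A] (I : MatchInst A P) {p : P} {a b : A} (hb : I.accP p b)
    (h : I.rkP p a < I.rkP p b) : I.accP p a := by
  by_contra ha
  have : I.rkP p a = (I.prefP p).length := List.idxOf_eq_length_iff.2 ha
  have : I.rkP p b < (I.prefP p).length := List.idxOf_lt_length_iff.2 hb
  omega

variable [Fintype A] [DecidableEq A] (I : MatchInst A P)

lemma rkP_lt_card {p : P} {a : A} (hP : (I.prefP p).Nodup) (ha : I.accP p a) :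
    I.rkP p a < Fintype.card A :=
  (List.idxOf_lt_length_iff.2 ha).trans_le hP.length_le_card

lemma score_le_card (p : P) (a : A) : I.score p a ≤ Fintype.card A := by
  unfold score
  split <;> omega

lemma score_le_score_iff {p : P} {a b : A} (hP : (I.prefP p).Nodup)
    (ha : I.accP p a) (hb : I.accP p b) :
    I.score p b ≤ I.score p a ↔ I.rkP p a ≤ I.rkP p b := by
  have := I.rkP_lt_card hP ha
  have := I.rkP_lt_card hP hb
  unfold score rkP at *
  unfold accP at ha hb
  rw [if_pos ha, if_pos hb]
  omega

variable [DecidableEq P]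

lemma Blocking.accP {I : MatchInst A P} {M : A → Option P} {a : A} {p : P}
    (hM : I.IsMatching M) (h : I.Blocking M a p) : I.accP p a := by
  rcases h.2 with ⟨-, ha⟩ | ⟨a', ha', hlt⟩
  · exact ha
  · exact I.accP_of_rkP_lt (hM.1 a' p ha').2 hlt

section Induces

variable {I} {d : P → ℕ} {M : A → Option P}

lemma Induces.not_adm_of_prefers (hd : I.Induces d M) {a : A} {p : P}
    (h : I.Prefers a p (M a)) : ¬ I.Adm d a p := by
  intro hadm
  cases hMa : M a with
  | none => exact (hd a).2 hMa p hadm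
  | some q =>
    have hpq : p ≠ q := by rintro rfl; exact h.ne hMa
    have := ((hd a).1 q hMa).2 p hadm hpq
    have := h.2 q hMa
    omega

lemma Induces.score_lt_of_prefers (hd : I.Induces d M) {a : A} {p : P}
    (h : I.Prefers a p (M a)) (ha : I.accP p a) : I.score p a < d p := by
  by_contra! hle
  exact hd.not_adm_of_prefers h ⟨h.1, ha, hle⟩

lemma induces_of_not_adm_of_prefers (hM : I.IsMatching M)
    (hle : ∀ a p, M a = some p → d p ≤ I.score p a)
    (hno : ∀ a p, I.Prefers a p (M a) → ¬ I.Adm d a p) : I.Induces d M := by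
  refine fun a => ⟨fun p hap => ⟨⟨(hM.1 a p hap).1, (hM.1 a p hap).2, hle a p hap⟩, ?_⟩,
    fun hnone p hadm => hno a p ⟨hadm.1, by simp [hnone]⟩ hadm⟩
  intro q hq hqp
  by_contra! hpq
  have hne : I.rkA a q ≠ I.rkA a p := fun h => hqp ((List.idxOf_inj hq.1).1 h)
  refine hno a q ⟨hq.1, ?_⟩ hq
  rintro q' hq'
  rw [hap, Option.some_inj] at hq'
  subst hq'
  omega

end Induces

lemma weaklyStableBlk_of_induces {f : (P → ℕ) → Prop} {M : A → Option P} {d : P → ℕ}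
    (hP : ∀ p, (I.prefP p).Nodup) (hM : I.IsMatching M) (hMf : f (mcount M))
    (hd : I.Induces d M) (hzero : ∀ p, Unconstrained f M p → d p = 0) :
    I.WeaklyStableBlk f M := by
  refine ⟨hM, hMf, fun a p hblk => ?_⟩
  have ha := hblk.accP hM
  have hlt := hd.score_lt_of_prefers hblk.1 ha
  refine ⟨fun a' ha' => ?_, fun hun => by simp [hzero p hun] at hlt⟩
  have hle : d p ≤ I.score p a' := ((hd a').1 p ha').1.2.2
  by_contra! hrk
  have := (I.score_le_score_iff (hP p) ha (hM.1 a' p ha').2).2 hrk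
  omega

open Classical in
/-- `Fintype.card A + 1` exceeds every score, so a constrained project to which `M` assigns
nobody admits nobody. -/
noncomputable def canonicalCutoff (f : (P → ℕ) → Prop) (M : A → Option P) (p : P) : ℕ :=
  if Unconstrained f M p then 0
  else if h : (univ.filter fun a => M a = some p).Nonempty then
    (univ.filter fun a => M a = some p).inf' h (I.score p)
  else Fintype.card A + 1

section canonicalCutoff

variable {f : (P → ℕ) → Prop} {M : A → Option P}

lemma canonicalCutoff_le_card_succ (p : P) : I.canonicalCutoff f M p ≤ Fintype.card A + 1 := by
  unfold canonicalCutoff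
  split_ifs with _ hne
  · omega
  · obtain ⟨a, ha⟩ := hne
    exact (inf'_le _ ha).trans ((I.score_le_card p a).trans (Nat.le_succ _))
  · rfl

lemma canonicalCutoff_eq_zero {p : P} (hp : Unconstrained f M p) :
    I.canonicalCutoff f M p = 0 :=
  if_pos hp

lemma canonicalCutoff_le_score {a : A} {p : P} (hap : M a = some p) :
    I.canonicalCutoff f M p ≤ I.score p a := by
  have ha : a ∈ univ.filter fun a => M a = some p := by simp [hap]
  unfold canonicalCutoff
  split_ifs with _ hne
  · exact Nat.zero_le _
  · exact inf'_le _ ha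
  · exact absurd ⟨a, ha⟩ hne

lemma exists_score_le_of_canonicalCutoff_le {a : A} {p : P} (hp : ¬ Unconstrained f M p)
    (h : I.canonicalCutoff f M p ≤ I.score p a) :
    ∃ a', M a' = some p ∧ I.score p a' ≤ I.score p a := by
  unfold canonicalCutoff at h
  rw [if_neg hp] at h
  split_ifs at h with hne
  · obtain ⟨a', ha', heq⟩ := exists_mem_eq_inf' hne (I.score p)
    exact ⟨a', (mem_filter.1 ha').2, heq ▸ h⟩
  · have := I.score_le_card p a
    omega

lemma WeaklyStableBlk.not_adm_canonicalCutoff {I : MatchInst A P} (hst : I.WeaklyStableBlk f M)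
    (hP : ∀ p, (I.prefP p).Nodup) (hcap : ∀ v, f v → ∀ p, v p ≤ I.cap p)
    {a : A} {p : P} (h : I.Prefers a p (M a)) : ¬ I.Adm (I.canonicalCutoff f M) a p := by
  rintro ⟨-, ha, hle⟩
  by_cases hp : Unconstrained f M p
  · have : mcount M p < I.cap p := by simpa [addCount] using hcap _ hp p
    exact (hst.2.2 a p ⟨h, .inl ⟨this, ha⟩⟩).2 hp
  · obtain ⟨a', ha', hscore⟩ := I.exists_score_le_of_canonicalCutoff_le hp hle
    have ha'P := (hst.1.1 a' p ha').2
    have hrk := (I.score_le_score_iff (hP p) ha ha'P).1 hscore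
    have hne : I.rkP p a ≠ I.rkP p a' := by
      intro heq
      rw [(List.idxOf_inj ha).1 heq] at h
      exact h.ne ha'
    have := (hst.2.2 a p ⟨h, .inr ⟨a', ha', by omega⟩⟩).1 a' ha'
    omega

end canonicalCutoff

end MatchInst

theorem weaklyStable_iff_induced_with_zero_cutoffs_on_unconstrained_general
    (I : MatchInst A P) (f : (P → ℕ) → Prop) (M : A → Option P)
    (hP : ∀ p, (I.prefP p).Nodup)
    (hcap : ∀ v, f v → ∀ p, v p ≤ I.cap p)
    (hM : I.IsMatching M) (hMf : f (mcount M)) :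
    I.WeaklyStableBlk f M ↔
      ∃ d : P → ℕ, (∀ p, d p ≤ Fintype.card A + 1) ∧ I.Induces d M ∧
        ∀ p, MatchInst.Unconstrained f M p → d p = 0 := by
  constructor
  · intro hst
    exact ⟨I.canonicalCutoff f M, I.canonicalCutoff_le_card_succ,
      MatchInst.induces_of_not_adm_of_prefers hM (fun _ _ => I.canonicalCutoff_le_score)
        (fun _ _ => hst.not_adm_canonicalCutoff hP hcap),
      fun _ => I.canonicalCutoff_eq_zero⟩
  · rintro ⟨d, -, hd, hzero⟩
    exact I.weaklyStableBlk_of_induces hP hM hMf hd hzero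

/-- A matching `M` is weakly stable iff it is induced by cutoff scores `d`
with `d p = 0` for every project `p` that is unconstrained for `M`. -/
theorem weaklyStable_iff_induced_with_zero_cutoffs_on_unconstrained
    (I : MatchInst A P) (f : (P → ℕ) → Prop) (M : A → Option P)
    (hA : ∀ a, (I.prefA a).Nodup) (hP : ∀ p, (I.prefP p).Nodup)
    (hf : Heredity f) (hcap : ∀ v, f v → ∀ p, v p ≤ I.cap p)
    (hM : I.IsMatching M) (hMf : f (mcount M)) :
    I.WeaklyStableBlk f M ↔
      ∃ d : P → ℕ, (∀ p, d p ≤ Fintype.card A + 1) ∧ I.Induces d M ∧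
        ∀ p, MatchInst.Unconstrained f M p → d p = 0 :=
  weaklyStable_iff_induced_with_zero_cutoffs_on_unconstrained_general I f M hP hcap hM hMf
end

section
/- In the classical college admissions model (where every matching respecting project capacities is feasible), a matching is cutoff stable if and only if it is stable in the sense of Gale and Shapley, and likewise strong stability and weak stability both coincide with Gale-Shapley stability. -/
open Finset

variable {A P : Type} [Fintype A] [Fintype P] [DecidableEq A] [DecidableEq P]

/-- Gale–Shapley stability: no blocking pair at all. -/
def MatchInst.GSStable (I : MatchInst A P) (M : A → Option P) : Prop :=
  I.IsMatching M ∧ ∀ a p, ¬ I.Blocking M a p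

/-- the trivial feasibility function declaring every capacity-respecting matching feasible -/
def capFeas (I : MatchInst A P) : (P → ℕ) → Prop := fun v => ∀ p, v p ≤ I.cap p

/-!
Under capacity feasibility, giving one more applicant a seat at a project that is not full stays
feasible, whether she is added or moved there. So weak, cutoff and strong non-wastefulness all
reduce to the classical condition that a project an acceptable applicant prefers is full, and
Gale–Shapley stability is exactly that condition plus fairness: an envied applicant `a'` at `p`
cannot tie with `a` in rank because `a'` is on `p`'s list.
-/

namespace MatchInst

omit [Fintype P]

variable (I : MatchInst A P)

def NonWasteful (M : A → Option P) : Prop :=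
  ∀ a p, I.Prefers a p (M a) → I.accP p a → I.cap p ≤ mcount M p

lemma mcount_swap_le_addCount (M : A → Option P) (a : A) (p q : P) :
    mcount (swap M a p) q ≤ addCount M p q := by
  unfold mcount addCount swap
  split_ifs with hqp
  · subst hqp
    refine (card_le_card fun b hb => ?_).trans (card_insert_le a _)
    rcases eq_or_ne b a with rfl | hba
    · exact mem_insert_self _ _
    · simp_all
  · refine card_le_card fun b hb => ?_
    rcases eq_or_ne b a with rfl | hba
    · simp_all [eq_comm]
    · simp_all

variable {I}

omit [DecidableEq A] in
lemma capFeas_addCount {M : A → Option P} {p : P} (hM : ∀ q, mcount M q ≤ I.cap q)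
    (hp : mcount M p < I.cap p) : capFeas I (addCount M p) := by
  intro q
  unfold addCount
  split_ifs with hqp
  · exact hqp ▸ hp
  · simpa using hM q

lemma capFeas_mcount_swap {M : A → Option P} {p : P} (a : A)
    (hM : ∀ q, mcount M q ≤ I.cap q) (hp : mcount M p < I.cap p) :
    capFeas I (mcount (swap M a p)) :=
  fun q => (mcount_swap_le_addCount M a p q).trans (capFeas_addCount hM hp q)

omit [Fintype A] [DecidableEq A] in
lemma Prefers.ne_some {a : A} {p : P} {o : Option P} (h : I.Prefers a p o) : o ≠ some p :=
  fun ho => (h.2 p ho).false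

lemma gsStable_iff_fair_nonWasteful {M : A → Option P} :
    I.GSStable M ↔ I.IsMatching M ∧ I.Fair M ∧ I.NonWasteful M := by
  constructor
  · rintro ⟨hM, hnb⟩
    refine ⟨hM, fun a p hne hpref a' ha' => ?_, fun a p hpref hacc => ?_⟩
    · have hrk : I.rkP p a' ≠ I.rkP p a := fun h =>
        hne ((List.idxOf_inj (hM.1 a' p ha').2).mp h ▸ ha')
      exact lt_of_le_of_ne (not_lt.mp fun hlt => hnb a p ⟨hpref, .inr ⟨a', ha', hlt⟩⟩) hrk
    · exact not_lt.mp fun hlt => hnb a p ⟨hpref, .inl ⟨hlt, hacc⟩⟩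
  · rintro ⟨hM, hfair, hnw⟩
    refine ⟨hM, fun a p ⟨hpref, hblk⟩ => ?_⟩
    rcases hblk with ⟨hlt, hacc⟩ | ⟨a', ha', hlt⟩
    · exact (hnw a p hpref hacc).not_gt hlt
    · exact lt_asymm hlt (hfair a p hpref.ne_some hpref a' ha')

lemma stronglyStable_capFeas_iff {M : A → Option P} :
    I.StronglyStable (capFeas I) M ↔ I.GSStable M := by
  constructor
  · rintro ⟨hM, -, hstrong⟩
    refine ⟨hM, fun a p hb => ?_⟩
    obtain ⟨henvy, hinfeas⟩ := hstrong a p hb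
    rcases hb.2 with ⟨hlt, -⟩ | ⟨a', ha', hlt⟩
    · exact hinfeas (capFeas_mcount_swap a hM.2 hlt)
    · exact lt_asymm hlt (henvy a' ha')
  · rintro ⟨hM, hnb⟩
    exact ⟨hM, hM.2, fun a p hb => (hnb a p hb).elim⟩

omit [DecidableEq A] in
lemma weaklyNonWasteful_capFeas_iff {M : A → Option P} (hM : ∀ q, mcount M q ≤ I.cap q) :
    I.WeaklyNonWasteful (capFeas I) M ↔ I.NonWasteful M := by
  constructor
  · rintro ⟨-, hwnw⟩ a p hpref hacc
    refine not_lt.mp fun hlt => ?_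
    rcases hwnw a p hpref.ne_some hacc hpref with hinfeas | hfull
    · exact hinfeas (capFeas_addCount hM hlt)
    · exact hfull.not_gt hlt
  · exact fun hnw => ⟨hM, fun a p _ hacc hpref => .inr (hnw a p hpref hacc)⟩

lemma cutoffNonWasteful_capFeas_iff {M : A → Option P} (hM : ∀ q, mcount M q ≤ I.cap q) :
    I.CutoffNonWasteful (capFeas I) M ↔ I.NonWasteful M := by
  constructor
  · rintro ⟨-, hcnw⟩ a p hpref hacc
    refine not_lt.mp fun hlt => ?_
    rcases hcnw a p hpref.ne_some hacc hpref with hinfeas | ⟨a', -, -, -, -, hinfeas⟩ | hfull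
    · exact hinfeas (capFeas_mcount_swap a hM hlt)
    · exact hinfeas (capFeas_mcount_swap a' hM hlt)
    · exact hfull.not_gt hlt
  · exact fun hnw => ⟨hM, fun a p _ hacc hpref => .inr (.inr (hnw a p hpref hacc))⟩

end MatchInst

theorem classical_stabilities_coincide_general (I : MatchInst A P) (M : A → Option P) :
    (I.CutoffStable (capFeas I) M ↔ I.GSStable M) ∧
    (I.StronglyStable (capFeas I) M ↔ I.GSStable M) ∧
    (I.WeaklyStable (capFeas I) M ↔ I.GSStable M) := by
  refine ⟨?_, MatchInst.stronglyStable_capFeas_iff, ?_⟩ <;>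
    rw [MatchInst.gsStable_iff_fair_nonWasteful]
  · exact and_congr_right fun hM => and_congr_right fun _ =>
      MatchInst.cutoffNonWasteful_capFeas_iff hM.2
  · exact and_congr_right fun hM => and_congr_right fun _ =>
      MatchInst.weaklyNonWasteful_capFeas_iff hM.2

/-- in the classical college admissions model, cutoff stability, strong
stability and weak stability all coincide with Gale–Shapley stability. -/
theorem classical_stabilities_coincide (I : MatchInst A P) (M : A → Option P)
    (hA : ∀ a, (I.prefA a).Nodup) (hP : ∀ p, (I.prefP p).Nodup) :
    (I.CutoffStable (capFeas I) M ↔ I.GSStable M) ∧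
    (I.StronglyStable (capFeas I) M ↔ I.GSStable M) ∧
    (I.WeaklyStable (capFeas I) M ↔ I.GSStable M) :=
  classical_stabilities_coincide_general I M
end
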